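/- arXiv:1707.09249 — 2 statements merged into one kernel-verified Lean document; each statement's English description precedes it below -/
import Mathlib

section
/- Every inner product on the (m-1)-th exterior power ∧^{m-1}V of an m-dimensional real inner product space V is induced by some inner product on V; that is, for any inner product [·,·]_{**} on ∧^{m-1}V there exists an inner product [·,·] on V such that [u₁∧...∧u_{m-1}, v₁∧...∧v_{m-1}]_{**} = det([u_i,v_j])_{(m-1)×(m-1)}. -/
/-!
Write `dim V = n + 1`. For a basis `e` of `V`, the wedges `(-1)^i e₀ ∧ ⋯ ∧ êᵢ ∧ ⋯ ∧ eₙ` form a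
basis of `⋀ⁿV`, and replacing `e` by `b` with `e.toMatrix b = P` changes this basis by `(adj P)ᵀ`.
Over `ℝ` and for `n ≥ 1` every matrix of positive determinant is an adjugate, so every basis of
`⋀ⁿV` with the same orientation arises from some basis `b` of `V`. Taking a `B₂`-orthonormal one,
`B₂` is induced by the inner product `⟪T ·, T ·⟫` for which `b` is orthonormal: both forms are the
identity on that basis of `⋀ⁿV`.
-/

open ExteriorAlgebra
open scoped RealInnerProductSpace

/-- The wedge `u₁ ∧ ... ∧ u_{m-1}`, as an element of `⋀[ℝ]^(m-1) V`. -/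
noncomputable def wedgeP {V : Type*} [AddCommGroup V] [Module ℝ V] (k : ℕ)
    (u : Fin k → V) : ⋀[ℝ]^k V :=
  ⟨ιMulti ℝ k u, ιMulti_range ℝ k (Set.mem_range_self u)⟩

open Module
open scoped Matrix

theorem Matrix.exists_adjugate_eq {ι : Type*} [Fintype ι] [DecidableEq ι]
    (hι : 2 ≤ Fintype.card ι) {X : Matrix ι ι ℝ} (hX : 0 < X.det) :
    ∃ A : Matrix ι ι ℝ, A.adjugate = X := by
  have hN : Fintype.card ι - 1 ≠ 0 := by omega
  -- `adj (adj X) = (det X) ^ (card ι - 2) • X`, so a positive multiple of `adj X` works.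
  refine ⟨((X.det ^ (Fintype.card ι - 2))⁻¹ ^ ((Fintype.card ι - 1 : ℕ)⁻¹ : ℝ)) • X.adjugate, ?_⟩
  rw [adjugate_smul, adjugate_adjugate X (by omega), Real.rpow_inv_natCast_pow (by positivity) hN,
    smul_smul, inv_mul_cancel₀ (by positivity), one_smul]

theorem LinearMap.BilinForm.exists_basis_orientation_orthonormal {E ι : Type*} [AddCommGroup E]
    [Module ℝ E] [FiniteDimensional ℝ E] [Fintype ι] [DecidableEq ι] [Nonempty ι]
    (hι : Fintype.card ι = finrank ℝ E) (B : LinearMap.BilinForm ℝ E)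
    (hsymm : ∀ x y, B x y = B y x) (hpos : ∀ x, x ≠ 0 → 0 < B x x) (o : Orientation ℝ E ι) :
    ∃ v : Basis ι ℝ E, v.orientation = o ∧ ∀ i j, B (v i) (v j) = if i = j then 1 else 0 := by
  obtain ⟨v₀, hv₀⟩ := exists_orthogonal_basis ⟨hsymm⟩
  let v₁ := v₀.reindex (Fintype.equivFinOfCardEq hι).symm
  have hv₁ : ∀ i j, i ≠ j → B (v₁ i) (v₁ j) = 0 := fun i j h => by
    simpa [v₁] using hv₀ ((Fintype.equivFinOfCardEq hι).injective.ne h)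
  have hv₁pos : ∀ i, 0 < B (v₁ i) (v₁ i) := fun i => hpos _ (v₁.ne_zero i)
  let v₂ := v₁.isUnitSMul (w := fun i => (√(B (v₁ i) (v₁ i)))⁻¹)
    fun i => (inv_pos.mpr (Real.sqrt_pos.mpr (hv₁pos i))).ne'.isUnit
  have hv₂ : ∀ i j, B (v₂ i) (v₂ j) = if i = j then 1 else 0 := by
    intro i j
    simp only [v₂, Basis.isUnitSMul_apply, map_smul, LinearMap.smul_apply, smul_eq_mul]
    split_ifs with h
    · subst h
      rw [← mul_assoc, ← mul_inv, Real.mul_self_sqrt (hv₁pos i).le, inv_mul_cancel₀ (hv₁pos i).ne']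
    · rw [hv₁ i j h, mul_zero, mul_zero]
  refine ⟨v₂.adjustToOrientation o, v₂.orientation_adjustToOrientation o, fun i j => ?_⟩
  by_cases h : i = j
  · subst h
    rcases v₂.adjustToOrientation_apply_eq_or_eq_neg o i with hi | hi <;> simp [hi, hv₂]
  · rcases v₂.adjustToOrientation_apply_eq_or_eq_neg o i with hi | hi <;>
      rcases v₂.adjustToOrientation_apply_eq_or_eq_neg o j with hj | hj <;> simp [hi, hj, hv₂, h]

namespace exteriorPower

section CommRing

variable {R M : Type*} [CommRing R] [AddCommGroup M] [Module R M] {n : ℕ}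

noncomputable def inducedForm (n : ℕ) (B : M →ₗ[R] M →ₗ[R] R) :
    ⋀[R]^n M →ₗ[R] ⋀[R]^n M →ₗ[R] R :=
  pairingDual R M n ∘ₗ map n B

lemma inducedForm_ιMulti (B : M →ₗ[R] M →ₗ[R] R) (u v : Fin n → M) :
    inducedForm n B (ιMulti R n u) (ιMulti R n v) = (Matrix.of fun i j => B (u i) (v j)).det := by
  rw [inducedForm, LinearMap.comp_apply, map_apply_ιMulti, pairingDual_ιMulti_ιMulti,
    ← Matrix.det_transpose]
  rfl

lemma pairingDual_ιMulti_comp_succAbove {x : Fin (n + 1) → M} {f : Fin (n + 1) → Dual R M}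
    (h₁ : ∀ i, f i (x i) = 1) (h₀ : ∀ ⦃i j⦄, i ≠ j → f i (x j) = 0) (p i : Fin (n + 1)) :
    pairingDual R M n (ιMulti R n (f ∘ p.succAbove)) (ιMulti R n (x ∘ i.succAbove)) =
      if p = i then 1 else 0 := by
  split_ifs with h
  · subst h
    simpa using pairingDual_apply_apply_eq_one x f h₁ h₀ n p.succAboveOrderEmb
  · simpa using pairingDual_apply_apply_eq_one_zero x f h₀ n p.succAboveOrderEmb
      i.succAboveOrderEmb fun h' => h (Fin.succAbove_left_injective (congrArg (⇑) h'))

end CommRing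

variable {K M : Type*} [Field K] [AddCommGroup M] [Module K M] {n : ℕ}

noncomputable def _root_.Module.Basis.omitWedgeDual (e : Basis (Fin (n + 1)) K M)
    (p : Fin (n + 1)) : Dual K (⋀[K]^n M) :=
  (-1 : K) ^ (p : ℕ) • pairingDual K M n (ιMulti K n (e.coord ∘ p.succAbove))

lemma _root_.Module.Basis.omitWedgeDual_apply (e : Basis (Fin (n + 1)) K M) (p i : Fin (n + 1)) :
    e.omitWedgeDual p ((-1 : K) ^ (i : ℕ) • ιMulti K n (e ∘ i.succAbove)) =
      if p = i then 1 else 0 := by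
  rw [Basis.omitWedgeDual, LinearMap.smul_apply, map_smul,
    pairingDual_ιMulti_comp_succAbove (x := e) (by simp) (fun i j h => by simp [h.symm]),
    smul_eq_mul, smul_eq_mul]
  split_ifs with h
  · subst h; simp [← mul_pow]
  · simp

noncomputable def _root_.Module.Basis.omitWedge (e : Basis (Fin (n + 1)) K M) :
    Basis (Fin (n + 1)) K (⋀[K]^n M) :=
  haveI := e.finiteDimensional_of_finite
  basisOfLinearIndependentOfCardEqFinrank
    (LinearIndependent.of_pairwise_dual_eq_zero_one
      (fun i : Fin (n + 1) => (-1 : K) ^ (i : ℕ) • ιMulti K n (e ∘ i.succAbove))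
      e.omitWedgeDual (fun p i h => (e.omitWedgeDual_apply p i).trans (if_neg h))
      (fun p => (e.omitWedgeDual_apply p p).trans (if_pos rfl)))
    (by rw [finrank_eq, finrank_eq_card_basis e, Fintype.card_fin, Nat.choose_succ_self_right])

lemma _root_.Module.Basis.omitWedge_apply (e : Basis (Fin (n + 1)) K M) (i : Fin (n + 1)) :
    e.omitWedge i = (-1 : K) ^ (i : ℕ) • ιMulti K n (e ∘ i.succAbove) := by
  simp [Module.Basis.omitWedge]

lemma _root_.Module.Basis.omitWedge_repr (e : Basis (Fin (n + 1)) K M) (x : ⋀[K]^n M)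
    (p : Fin (n + 1)) : e.omitWedge.repr x p = e.omitWedgeDual p x := by
  rw [← Basis.coord_apply]
  congr 1
  refine e.omitWedge.ext fun i => ?_
  rw [Basis.coord_apply, Basis.repr_self, Basis.omitWedge_apply, Basis.omitWedgeDual_apply]
  by_cases h : p = i
  · simp [h]
  · simp [h, Finsupp.single_eq_of_ne h]

lemma _root_.Module.Basis.toMatrix_omitWedge (e b : Basis (Fin (n + 1)) K M) :
    e.omitWedge.toMatrix b.omitWedge = (e.toMatrix b).adjugateᵀ := by
  ext p i
  rw [Basis.toMatrix_apply, Basis.omitWedge_repr, Basis.omitWedge_apply, Basis.omitWedgeDual,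
    LinearMap.smul_apply, map_smul, pairingDual_ιMulti_ιMulti, Matrix.transpose_apply,
    Matrix.adjugate_fin_succ_eq_det_submatrix, ← Matrix.det_transpose, pow_add, smul_eq_mul,
    smul_eq_mul, ← mul_assoc, mul_comm ((-1 : K) ^ (p : ℕ))]
  rfl

lemma inducedForm_omitWedge {B : M →ₗ[K] M →ₗ[K] K} {b : Basis (Fin (n + 1)) K M}
    (hB : ∀ i j, B (b i) (b j) = if i = j then 1 else 0) (i j : Fin (n + 1)) :
    inducedForm n B (b.omitWedge i) (b.omitWedge j) = if i = j then 1 else 0 := by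
  rw [Basis.omitWedge_apply, Basis.omitWedge_apply, map_smul, map_smul, LinearMap.smul_apply,
    inducedForm, LinearMap.comp_apply, map_apply_ιMulti, ← Function.comp_assoc,
    pairingDual_ιMulti_comp_succAbove (f := B ∘ b) (by simp [hB]) (fun i j h => by simp [hB, h])]
  split_ifs with h
  · subst h; simp [← mul_pow]
  · simp

theorem _root_.Module.Basis.exists_omitWedge_eq {V : Type*} [AddCommGroup V] [Module ℝ V]
    (hn : n ≠ 0) (e : Basis (Fin (n + 1)) ℝ V) (ω : Basis (Fin (n + 1)) ℝ (⋀[ℝ]^n V))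
    (hω : 0 < e.omitWedge.det ω) : ∃ b : Basis (Fin (n + 1)) ℝ V, b.omitWedge = ω := by
  obtain ⟨A, hA⟩ := Matrix.exists_adjugate_eq (X := (e.omitWedge.toMatrix ω)ᵀ)
    (by rw [Fintype.card_fin]; omega) (by rwa [Matrix.det_transpose, ← Basis.det_apply])
  have hAdet : IsUnit A.det := by
    refine isUnit_iff_ne_zero.mpr fun h => hω.ne' ?_
    rw [Basis.det_apply, ← Matrix.det_transpose, ← hA, Matrix.det_adjugate, h,
      zero_pow (by rw [Fintype.card_fin]; omega)]
  let b := e.map (A.toLinearEquiv e hAdet)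
  have hb : e.toMatrix b = A := by
    ext i j
    rw [Basis.toMatrix_apply, Basis.map_apply, Matrix.toLinearEquiv_apply,
      ← LinearMap.toMatrix_apply, LinearMap.toMatrix_toLin]
  refine ⟨b, Basis.eq_of_apply_eq fun i => ?_⟩
  rw [← e.omitWedge.sum_toMatrix_smul_self ω i, ← e.omitWedge.sum_toMatrix_smul_self b.omitWedge i,
    Basis.toMatrix_omitWedge, hb, hA, Matrix.transpose_transpose]

theorem exists_posDef_eq_inducedForm {V : Type*} [NormedAddCommGroup V] [InnerProductSpace ℝ V]
    [FiniteDimensional ℝ V] (hn : n ≠ 0) (hV : finrank ℝ V = n + 1)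
    (B₂ : ⋀[ℝ]^n V →ₗ[ℝ] ⋀[ℝ]^n V →ₗ[ℝ] ℝ) (hsymm : ∀ w w', B₂ w w' = B₂ w' w)
    (hpos : ∀ w, w ≠ 0 → 0 < B₂ w w) :
    ∃ B : V →ₗ[ℝ] V →ₗ[ℝ] ℝ, (∀ x y, B x y = B y x) ∧ (∀ x, x ≠ 0 → 0 < B x x) ∧
      B₂ = inducedForm n B := by
  let e : OrthonormalBasis (Fin (n + 1)) ℝ V := (stdOrthonormalBasis ℝ V).reindex (finCongr hV)
  obtain ⟨ω, hωo, hω⟩ := LinearMap.BilinForm.exists_basis_orientation_orthonormal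
    (by rw [finrank_eq, hV, Fintype.card_fin, Nat.choose_succ_self_right]) B₂ hsymm hpos
    e.toBasis.omitWedge.orientation
  obtain ⟨b, rfl⟩ := e.toBasis.exists_omitWedge_eq hn ω
    ((Basis.orientation_eq_iff_det_pos _ _).mp hωo.symm)
  let T := b.equiv e.toBasis (Equiv.refl _)
  let B := (innerₗ V).compl₁₂ T.toLinearMap T.toLinearMap
  have hB : ∀ i j, B (b i) (b j) = if i = j then 1 else 0 := fun i j => by
    simp [B, T, orthonormal_iff_ite.mp e.orthonormal]
  refine ⟨B, fun x y => real_inner_comm _ _,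
    fun x hx => real_inner_self_pos.mpr (T.map_ne_zero_iff.mpr hx),
    LinearMap.ext_basis b.omitWedge b.omitWedge fun i j => ?_⟩
  rw [hω, inducedForm_omitWedge hB]

end exteriorPower

/-- Every inner product on the `(m-1)`-th exterior power `⋀^{m-1}V` of an
`m`-dimensional real inner product space `V` is induced by some inner product on `V`:
for any inner product `[·,·]_{**}` on `⋀^{m-1}V` there is an inner product `[·,·]` on
`V` with `[u₁∧...∧u_{m-1}, v₁∧...∧v_{m-1}]_{**} = det([u_i,v_j])`. -/
theorem stmt5 {V : Type*} [NormedAddCommGroup V] [InnerProductSpace ℝ V]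
    [FiniteDimensional ℝ V] (m : ℕ) (hm : 2 ≤ m) (hV : Module.finrank ℝ V = m)
    (B₂ : (⋀[ℝ]^(m - 1) V) →ₗ[ℝ] (⋀[ℝ]^(m - 1) V) →ₗ[ℝ] ℝ)
    (hB₂symm : ∀ w w', B₂ w w' = B₂ w' w)
    (hB₂pos : ∀ w, w ≠ 0 → 0 < B₂ w w) :
    ∃ B : V →ₗ[ℝ] V →ₗ[ℝ] ℝ,
      (∀ x y : V, B x y = B y x) ∧
      (∀ x : V, x ≠ 0 → 0 < B x x) ∧
      (∀ u v : Fin (m - 1) → V,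
        B₂ (wedgeP (m - 1) u) (wedgeP (m - 1) v) =
          Matrix.det (Matrix.of fun i j => B (u i) (v j))) := by
  obtain ⟨B, hsymm, hpos, hB₂⟩ :=
    exteriorPower.exists_posDef_eq_inducedForm (by omega) (by omega) B₂ hB₂symm hB₂pos
  exact ⟨B, hsymm, hpos, fun u v => hB₂ ▸ exteriorPower.inducedForm_ιMulti B u v⟩
end

section
/- Let Γ be a compact invariant set for the flow of a C¹ vector field X on a manifold M, and suppose T_Γ M = E ⊕ F is a continuous DX_t-invariant splitting such that E is uniformly contracted (‖DX_t|_{E_x}‖ ≤ C e^{−λt} for t ≥ 0). Then the vector field direction lies in F: X(x) ∈ F_x for all x ∈ Γ. -/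
/-!
Invariance of the splitting makes the projection onto `E` commute with the derivative cocycle,
so the `E`-component of `X x` is the image under `D_t` of the `E`-component of `X` at
`φ_{-t} x`. By compactness these components are uniformly bounded, and by contraction the image
has norm at most `C K e^{-λt}`; letting `t → ∞`, the `E`-component of `X x` vanishes.
-/

open Real Filter Topology

theorem ContinuousLinearMap.proj_comp_eq_comp_proj {R V : Type*} [Semiring R]
    [TopologicalSpace V] [AddCommMonoid V] [ContinuousAdd V] [Module R V]
    {A P Q P' Q' : V →L[R] V}
    (hPQ : P + Q = ContinuousLinearMap.id R V) (hP' : P'.comp P' = P') (hP'Q' : P'.comp Q' = 0)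
    (hP : Submodule.map (A : V →ₗ[R] V) (LinearMap.range (P : V →ₗ[R] V)) ≤
      LinearMap.range (P' : V →ₗ[R] V))
    (hQ : Submodule.map (A : V →ₗ[R] V) (LinearMap.range (Q : V →ₗ[R] V)) ≤
      LinearMap.range (Q' : V →ₗ[R] V)) :
    P'.comp A = A.comp P := by
  ext v
  obtain ⟨u, hu⟩ : A (P v) ∈ LinearMap.range (P' : V →ₗ[R] V) := hP ⟨P v, ⟨v, rfl⟩, rfl⟩
  obtain ⟨w, hw⟩ : A (Q v) ∈ LinearMap.range (Q' : V →ₗ[R] V) := hQ ⟨Q v, ⟨v, rfl⟩, rfl⟩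
  have hv : P v + Q v = v := by simpa using congr($hPQ v)
  have hPP' : P' (A (P v)) = A (P v) := by simpa [← hu] using congr($hP' u)
  have hQP' : P' (A (Q v)) = 0 := by simpa [← hw] using congr($hP'Q' w)
  rw [comp_apply, comp_apply]
  conv_lhs => rw [← hv, map_add, map_add, hPP', hQP', add_zero]

theorem nonpos_of_forall_le_mul_exp_neg {a c lam : ℝ} (hlam : 0 < lam)
    (h : ∀ t ≥ (0 : ℝ), a ≤ c * exp (-lam * t)) : a ≤ 0 := by
  have hlim : Tendsto (fun t : ℝ => c * exp (-lam * t)) atTop (𝓝 0) := by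
    simpa using (tendsto_exp_atBot.comp
      (tendsto_id.const_mul_atTop_of_neg (neg_lt_zero.2 hlam))).const_mul c
  exact ge_of_tendsto hlim ((eventually_ge_atTop 0).mono h)

theorem stmt13_general {M : Type*} [TopologicalSpace M] (m : ℕ)
    (φ : ℝ → M → M) (hφ0 : ∀ x, φ 0 x = x) (hφadd : ∀ t s x, φ (t + s) x = φ t (φ s x))
    (Γ : Set M) (hΓcompact : IsCompact Γ) (hΓinv : ∀ x ∈ Γ, ∀ t : ℝ, φ t x ∈ Γ)
    (D : ℝ → M → (EuclideanSpace ℝ (Fin m) →L[ℝ] EuclideanSpace ℝ (Fin m)))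
    (X : M → EuclideanSpace ℝ (Fin m)) (hXcont : Continuous X)
    (hXD : ∀ x ∈ Γ, ∀ t : ℝ, D t x (X x) = X (φ t x))
    (πE πF : M → (EuclideanSpace ℝ (Fin m) →L[ℝ] EuclideanSpace ℝ (Fin m)))
    (hπEcont : Continuous πE)
    (hsum : ∀ x ∈ Γ, πE x + πF x = ContinuousLinearMap.id ℝ (EuclideanSpace ℝ (Fin m)))
    (hEproj : ∀ x ∈ Γ, (πE x).comp (πE x) = πE x)
    (hEFzero : ∀ x ∈ Γ, (πE x).comp (πF x) = 0)
    (hEinv : ∀ x ∈ Γ, ∀ t : ℝ,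
      Submodule.map ((D t x) : EuclideanSpace ℝ (Fin m) →ₗ[ℝ] EuclideanSpace ℝ (Fin m))
          (LinearMap.range ((πE x) : EuclideanSpace ℝ (Fin m) →ₗ[ℝ] EuclideanSpace ℝ (Fin m))) =
        LinearMap.range ((πE (φ t x)) : EuclideanSpace ℝ (Fin m) →ₗ[ℝ] EuclideanSpace ℝ (Fin m)))
    (hFinv : ∀ x ∈ Γ, ∀ t : ℝ,
      Submodule.map ((D t x) : EuclideanSpace ℝ (Fin m) →ₗ[ℝ] EuclideanSpace ℝ (Fin m))
          (LinearMap.range ((πF x) : EuclideanSpace ℝ (Fin m) →ₗ[ℝ] EuclideanSpace ℝ (Fin m))) =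
        LinearMap.range ((πF (φ t x)) : EuclideanSpace ℝ (Fin m) →ₗ[ℝ] EuclideanSpace ℝ (Fin m)))
    (C lam : ℝ) (hC : 0 < C) (hlam : 0 < lam)
    (hcontr : ∀ x ∈ Γ, ∀ t ≥ (0 : ℝ), ∀ v : EuclideanSpace ℝ (Fin m),
      v ∈ LinearMap.range ((πE x) : EuclideanSpace ℝ (Fin m) →ₗ[ℝ] EuclideanSpace ℝ (Fin m)) →
      ‖D t x v‖ ≤ C * Real.exp (-lam * t) * ‖v‖) :
    ∀ x ∈ Γ, X x ∈
      LinearMap.range ((πF x) : EuclideanSpace ℝ (Fin m) →ₗ[ℝ] EuclideanSpace ℝ (Fin m)) := by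
  intro x hx
  obtain ⟨K, hK⟩ :=
    hΓcompact.exists_bound_of_continuousOn (hπEcont.clm_apply hXcont).continuousOn
  have hdecay : ∀ t ≥ (0 : ℝ), ‖πE x (X x)‖ ≤ C * K * exp (-lam * t) := by
    intro t ht
    set y := φ (-t) x
    have hy : y ∈ Γ := hΓinv x hx (-t)
    have hyx : φ t y = x := by rw [← hφadd, add_neg_cancel, hφ0]
    have hy' : φ t y ∈ Γ := hΓinv y hy t
    have hcomm := ContinuousLinearMap.proj_comp_eq_comp_proj (hsum y hy) (hEproj _ hy')
      (hEFzero _ hy') (hEinv y hy t).le (hFinv y hy t).le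
    calc ‖πE x (X x)‖ = ‖D t y (πE y (X y))‖ := by
          rw [← hyx, ← hXD y hy t, ← ContinuousLinearMap.comp_apply, hcomm]; rfl
      _ ≤ C * exp (-lam * t) * ‖πE y (X y)‖ := hcontr y hy t ht _ (LinearMap.mem_range_self _ _)
      _ ≤ C * exp (-lam * t) * K := by gcongr; exact hK y hy
      _ = C * K * exp (-lam * t) := by ring
  have hE : πE x (X x) = 0 := norm_le_zero_iff.1 (nonpos_of_forall_le_mul_exp_neg hlam hdecay)
  exact ⟨X x, by simpa [hE] using congr($(hsum x hx) (X x))⟩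

/-- Let `Γ` be a compact invariant set for the flow `φ` of a `C¹` vector field `X`
(with derivative cocycle `D` over the flow, modelled on `ℝ^m`), and let
`T_Γ M = E ⊕ F` be a continuous `D`-invariant splitting (given by continuous
complementary projections `πE`, `πF`) such that `E` is uniformly contracted:
`‖D_t|_{E_x}‖ ≤ C e^{−λt}` for `t ≥ 0`.  Then the vector field direction lies in `F`:
`X(x) ∈ F_x` for all `x ∈ Γ`. -/
theorem stmt13 {M : Type*} [TopologicalSpace M] (m : ℕ)
    (φ : ℝ → M → M) (hφ0 : ∀ x, φ 0 x = x) (hφadd : ∀ t s x, φ (t + s) x = φ t (φ s x))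
    (hφcont : Continuous fun p : ℝ × M => φ p.1 p.2)
    (Γ : Set M) (hΓcompact : IsCompact Γ) (hΓinv : ∀ x ∈ Γ, ∀ t : ℝ, φ t x ∈ Γ)
    (D : ℝ → M → (EuclideanSpace ℝ (Fin m) →L[ℝ] EuclideanSpace ℝ (Fin m)))
    (hD0 : ∀ x, D 0 x = ContinuousLinearMap.id ℝ (EuclideanSpace ℝ (Fin m)))
    (hDcoc : ∀ t s x, D (t + s) x = (D t (φ s x)).comp (D s x))
    (hDcont : Continuous fun p : ℝ × M => D p.1 p.2)
    (X : M → EuclideanSpace ℝ (Fin m)) (hXcont : Continuous X)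
    (hXD : ∀ x ∈ Γ, ∀ t : ℝ, D t x (X x) = X (φ t x))
    (πE πF : M → (EuclideanSpace ℝ (Fin m) →L[ℝ] EuclideanSpace ℝ (Fin m)))
    (hπEcont : Continuous πE) (hπFcont : Continuous πF)
    (hsum : ∀ x ∈ Γ, πE x + πF x = ContinuousLinearMap.id ℝ (EuclideanSpace ℝ (Fin m)))
    (hEproj : ∀ x ∈ Γ, (πE x).comp (πE x) = πE x)
    (hFproj : ∀ x ∈ Γ, (πF x).comp (πF x) = πF x)
    (hEFzero : ∀ x ∈ Γ, (πE x).comp (πF x) = 0)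
    (hEinv : ∀ x ∈ Γ, ∀ t : ℝ,
      Submodule.map ((D t x) : EuclideanSpace ℝ (Fin m) →ₗ[ℝ] EuclideanSpace ℝ (Fin m))
          (LinearMap.range ((πE x) : EuclideanSpace ℝ (Fin m) →ₗ[ℝ] EuclideanSpace ℝ (Fin m))) =
        LinearMap.range ((πE (φ t x)) : EuclideanSpace ℝ (Fin m) →ₗ[ℝ] EuclideanSpace ℝ (Fin m)))
    (hFinv : ∀ x ∈ Γ, ∀ t : ℝ,
      Submodule.map ((D t x) : EuclideanSpace ℝ (Fin m) →ₗ[ℝ] EuclideanSpace ℝ (Fin m))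
          (LinearMap.range ((πF x) : EuclideanSpace ℝ (Fin m) →ₗ[ℝ] EuclideanSpace ℝ (Fin m))) =
        LinearMap.range ((πF (φ t x)) : EuclideanSpace ℝ (Fin m) →ₗ[ℝ] EuclideanSpace ℝ (Fin m)))
    (C lam : ℝ) (hC : 0 < C) (hlam : 0 < lam)
    (hcontr : ∀ x ∈ Γ, ∀ t ≥ (0 : ℝ), ∀ v : EuclideanSpace ℝ (Fin m),
      v ∈ LinearMap.range ((πE x) : EuclideanSpace ℝ (Fin m) →ₗ[ℝ] EuclideanSpace ℝ (Fin m)) →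
      ‖D t x v‖ ≤ C * Real.exp (-lam * t) * ‖v‖) :
    ∀ x ∈ Γ, X x ∈
      LinearMap.range ((πF x) : EuclideanSpace ℝ (Fin m) →ₗ[ℝ] EuclideanSpace ℝ (Fin m)) :=
  stmt13_general m φ hφ0 hφadd Γ hΓcompact hΓinv D X hXcont hXD πE πF hπEcont hsum hEproj hEFzero
    hEinv hFinv C lam hC hlam hcontr
end
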